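/- Let r ≥ 2, k ≥ 1, and work in R = MvPolynomial (Fin k) ℚ. For every t with 1 ≤ t ≤ r, every injective map i : Fin t → Fin r, and every injective map j : Fin t → Fin k, the coefficient of the monomial ∏_{s ∈ Fin t} X_{j(s)}^{i(s)·r^k} in the determinant of the block matrix G whose (u,v) block equals X_{j(v)}^{i(u)} · Q_{j(v)}^{i(u)} is equal to 1 or −1; this monomial has total degree r^k·(i(1)+⋯+i(t)), which is the maximal total degree of the determinant. -/

import Mathlib

/-!
Every nonzero Leibniz term of `det G` is `±` a monomial of degree
`∑ b, i b.1 = r ^ k * ∑ s, i s`, because the permutation only reorders the rows; this gives the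
degree bound. The term of a permutation `σ` has exponent `m` only if
`∑ b, i b.1 * i (σ b).1 = ∑ b, i b.1 ^ 2`, which by `∑ b, (i (σ b).1 - i b.1) ^ 2 = 0` and
injectivity of `i` forces `σ` to preserve the blocks. The support pattern of `G` then leaves only
the block shift `(u, x) ↦ (u, x + i u • e (j u))`, so the coefficient of `m` is its sign.
-/

open MvPolynomial Finset

theorem Matrix.translation_pow_apply {V R : Type*} [AddCommMonoid V] [Fintype V] [DecidableEq V]
    [Semiring R] (e : V) (n : ℕ) (x y : V) :
    ((Matrix.of fun x y : V => if x = y + e then (1 : R) else 0) ^ n) x y =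
      if x = y + n • e then 1 else 0 := by
  induction n generalizing x y with
  | zero => simp [Matrix.one_apply]
  | succ n ih =>
    rw [pow_succ, Matrix.mul_apply, Finset.sum_eq_single (y + e)]
    · simp [ih, succ_nsmul, add_assoc, add_comm e (n • e)]
    · intro z _ hz
      simp [hz]
    · simp

theorem Equiv.Perm.apply_eq_of_sum_mul_eq_sum_sq {α R : Type*} [Fintype α] [CommRing R]
    [LinearOrder R] [IsStrictOrderedRing R] (σ : Equiv.Perm α) (f : α → R)
    (h : ∑ a, f a * f (σ a) = ∑ a, f a ^ 2) (a : α) : f (σ a) = f a := by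
  have hsq : ∑ a, (f (σ a) - f a) ^ 2 = 0 := by
    have hperm : ∑ a, f (σ a) ^ 2 = ∑ a, f a ^ 2 := Equiv.sum_comp σ (f · ^ 2)
    simp only [sub_sq, sum_add_distrib, sum_sub_distrib, mul_assoc, ← Finset.mul_sum, hperm]
    simp only [mul_comm (f (σ _)), h]
    ring
  have ha := (Finset.sum_eq_zero_iff_of_nonneg fun a _ => sq_nonneg _).1 hsq a (mem_univ a)
  exact sub_eq_zero.1 (pow_eq_zero_iff two_ne_zero |>.1 ha)

theorem Finsupp.sum_mul_sum_single_apply {ι κ τ : Type*} [Fintype ι] {j : ι → τ}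
    (hj : Function.Injective j) (w : ι → ℕ) (s : Finset κ) (π : κ → ι) (g : κ → ℕ) :
    ∑ x, w x * (∑ b ∈ s, Finsupp.single (j (π b)) (g b)) (j x) = ∑ b ∈ s, w (π b) * g b := by
  classical
  simp only [Finsupp.finsetSum_apply, Finset.mul_sum, Finsupp.single_apply, hj.eq_iff]
  rw [Finset.sum_comm]
  simp

namespace Matrix

variable {n σ R : Type*} [Fintype n] [DecidableEq n] [CommRing R]

theorem totalDegree_det_le (M : Matrix n n (MvPolynomial σ R)) (w : n → ℕ)
    (hw : ∀ a b, (M a b).totalDegree ≤ w a) : M.det.totalDegree ≤ ∑ a, w a := by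
  rw [det_apply]
  refine totalDegree_finsetSum_le fun τ _ => ?_
  calc (Equiv.Perm.sign τ • ∏ b, M (τ b) b).totalDegree
      ≤ (∏ b, M (τ b) b).totalDegree := by
        rw [Units.smul_def]; exact totalDegree_smul_le _ _
    _ ≤ ∑ b, (M (τ b) b).totalDegree := totalDegree_finsetProd _ _
    _ ≤ ∑ b, w (τ b) := sum_le_sum fun b _ => hw _ _
    _ = ∑ a, w a := Equiv.sum_comp τ w

theorem coeff_det_eq_sign_of_unique (M : Matrix n n (MvPolynomial σ R)) (P : n → n → Prop)
    [∀ a b, Decidable (P a b)] (D : n → n → σ →₀ ℕ)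
    (hM : ∀ a b, M a b = if P a b then monomial (D a b) 1 else 0) (d : σ →₀ ℕ)
    (τ₀ : Equiv.Perm n)
    (huniq : ∀ τ : Equiv.Perm n, ((∀ b, P (τ b) b) ∧ ∑ b, D (τ b) b = d) ↔ τ = τ₀) :
    M.det.coeff d = ((Equiv.Perm.sign τ₀ : ℤ) : R) := by
  classical
  have hterm : ∀ τ : Equiv.Perm n, (∏ b, M (τ b) b).coeff d = if τ = τ₀ then 1 else 0 := by
    intro τ
    simp only [hM, prod_ite_zero, ← monomial_sum_one]
    split_ifs with hP hτ hτ
    · rw [coeff_monomial, if_pos ((huniq τ).2 hτ).2]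
    · rw [coeff_monomial, if_neg fun hD => hτ ((huniq τ).1 ⟨fun b => hP b (mem_univ b), hD⟩)]
    · exact absurd (fun b _ => ((huniq τ).2 hτ).1 b) hP
    · exact coeff_zero d
  simp only [det_apply, coeff_sum, Units.smul_def, coeff_smul, hterm]
  simp

end Matrix

section BlockShift

variable {ι V τ : Type*} [Fintype ι] [AddCommGroup V] [Fintype V]

def blockShift (c : ι → V) : Equiv.Perm (ι × V) :=
  Equiv.prodShear (Equiv.refl ι) fun u => Equiv.addRight (c u)

theorem eq_blockShift_iff {w : ι → ℕ} (hw : Function.Injective w) {j : ι → τ}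
    (hj : Function.Injective j) (e : ι → V) (σ : Equiv.Perm (ι × V)) :
    ((∀ b : ι × V, (σ b).2 = b.2 + w (σ b).1 • e b.1) ∧
        ∑ b : ι × V, Finsupp.single (j b.1) (w (σ b).1) =
          ∑ b : ι × V, Finsupp.single (j b.1) (w b.1)) ↔
      σ = blockShift fun u => w u • e u := by
  constructor
  · rintro ⟨hP, hD⟩
    -- pair both exponent vectors with the weights `j x ↦ w x`
    have hsq : ∑ b : ι × V, (w b.1 : ℤ) * w (σ b).1 = ∑ b : ι × V, (w b.1 : ℤ) ^ 2 := by
      have := congrArg (fun d => ∑ x, w x * d (j x)) hD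
      simp only [Finsupp.sum_mul_sum_single_apply hj] at this
      exact_mod_cast (by simpa [sq] using this)
    have hfst : ∀ b, (σ b).1 = b.1 := fun b =>
      hw (by exact_mod_cast σ.apply_eq_of_sum_mul_eq_sum_sq (fun b => (w b.1 : ℤ)) hsq b)
    ext b : 1
    exact Prod.ext (hfst b) (by rw [hP b, hfst b]; rfl)
  · rintro rfl
    exact ⟨fun b => rfl, rfl⟩

end BlockShift

/-- In `det G` (with `G` as in Statement 1, over
`MvPolynomial (Fin k) ℚ`), the coefficient of the monomial
`∏ s, X (j s) ^ (i s * r ^ k)` is `1` or `-1`; this monomial has total degree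
`r ^ k * ∑ s, i s`, which is the (maximal) total degree of the determinant. -/
theorem construction1_det_leading_monomial (r k : ℕ) (hr : 2 ≤ r)
    (t : ℕ)
    (i : Fin t → Fin r) (hi : Function.Injective i)
    (j : Fin t → Fin k) (hj : Function.Injective j) :
    haveI : NeZero r := ⟨by omega⟩
    let G : Matrix (Fin t × (Fin k → ZMod r)) (Fin t × (Fin k → ZMod r))
        (MvPolynomial (Fin k) ℚ) :=
      Matrix.of fun p q =>
        (X (j q.1) : MvPolynomial (Fin k) ℚ) ^ (i p.1 : ℕ) *
          ((Matrix.of fun (x y : Fin k → ZMod r) =>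
              if x = y + Pi.single (j q.1) 1 then (1 : MvPolynomial (Fin k) ℚ) else 0) ^
            (i p.1 : ℕ)) p.2 q.2
    let m : Fin k →₀ ℕ := ∑ s : Fin t, Finsupp.single (j s) ((i s : ℕ) * r ^ k)
    (MvPolynomial.coeff m G.det = 1 ∨ MvPolynomial.coeff m G.det = -1) ∧
      (m.sum fun _ n => n) = r ^ k * ∑ s : Fin t, (i s : ℕ) ∧
      G.det.totalDegree = r ^ k * ∑ s : Fin t, (i s : ℕ) := by
  have : NeZero r := ⟨by omega⟩
  intro G m
  set w : Fin t → ℕ := fun s => i s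
  set e : Fin t → Fin k → ZMod r := fun v => Pi.single (j v) 1
  have hG : ∀ a b, G a b = if a.2 = b.2 + w a.1 • e b.1
      then monomial (Finsupp.single (j b.1) (w a.1)) 1 else 0 := by
    intro a b
    simp [G, Matrix.translation_pow_apply, X_pow_eq_monomial, w, e]
  have hsum : ∑ b : Fin t × (Fin k → ZMod r), w b.1 = r ^ k * ∑ s, (i s : ℕ) := by
    simp [Fintype.sum_prod_type, w, Finset.mul_sum, mul_comm]
  have hm : ∑ b : Fin t × (Fin k → ZMod r), Finsupp.single (j b.1) (w b.1) = m := by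
    simp [Fintype.sum_prod_type, Finsupp.smul_single, mul_comm, m, w]
  have hcoeff : G.det.coeff m = ((Equiv.Perm.sign (blockShift fun u => w u • e u) : ℤ) : ℚ) :=
    Matrix.coeff_det_eq_sign_of_unique G _ _ hG m _ fun σ =>
      hm ▸ eq_blockShift_iff (Fin.val_injective.comp hi) hj e σ
  have hdeg : (m.sum fun _ n => n) = r ^ k * ∑ s, (i s : ℕ) := by
    rw [← hm, ← Finsupp.sum_finsetSum_index (fun _ => rfl) (fun _ _ _ => rfl), ← hsum]
    simp
  refine ⟨?_, hdeg, le_antisymm ?_ ?_⟩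
  · rw [hcoeff]
    rcases Int.units_eq_one_or (Equiv.Perm.sign (blockShift fun u => w u • e u)) with h | h <;>
      rw [h] <;> norm_num
  · rw [← hsum]
    refine Matrix.totalDegree_det_le G (fun a => w a.1) fun a b => ?_
    rw [hG]
    split_ifs <;> simp
  · rw [← hdeg]
    refine le_totalDegree ?_
    rw [mem_support_iff, hcoeff]
    simp
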